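/- arXiv:2602.17191 — 2 statements merged into one kernel-verified Lean document; each statement's English description precedes it below -/
import Mathlib

section
/- Let f be continuous and π-periodic and suppose ḡ ∈ 𝒞 minimizes ‖f − g‖_∞ over g ∈ 𝒞, with minimal value 𝔡 > 0. Then the sets Φ = {φ : f(φ) − ḡ(φ) = 𝔡} and Ψ = {φ : ḡ(φ) − f(φ) = 𝔡} are both nonempty. -/
open Real

/-- The family `𝒞` of logarithms of polar radii of origin-centered ellipses. -/
def EllipseLog : Set (ℝ → ℝ) :=
  {g | ∃ a b c : ℝ, 0 < a ∧ b ^ 2 + c ^ 2 < a ^ 2 ∧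
    g = fun φ => -(1 / 2) * log (a + b * cos (2 * φ) + c * sin (2 * φ))}

/-- Sup-distance between two (π-periodic continuous) functions. -/
noncomputable def supDist (f g : ℝ → ℝ) : ℝ := ⨆ φ, |f φ - g φ|

/-- A continuous `π`-periodic function attains its maximum. -/
lemma periodic_exists_max (h : ℝ → ℝ) (hc : Continuous h) (hp : Function.Periodic h π) :
    ∃ x₀, ∀ x, h x ≤ h x₀ := by
  obtain ⟨x₀, hx₀, hmax⟩ := (isCompact_Icc (a := (0:ℝ)) (b := π)).exists_isMaxOn
    (Set.nonempty_Icc.2 pi_pos.le) hc.continuousOn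
  refine ⟨x₀, fun x => ?_⟩
  obtain ⟨y, hy, hxy⟩ := hp.exists_mem_Ico₀ pi_pos x
  rw [hxy]
  exact hmax ⟨hy.1, hy.2.le⟩

/-- The positivity of the trigonometric expression inside the log. -/
lemma trig_pos {a b c : ℝ} (ha : 0 < a) (habc : b ^ 2 + c ^ 2 < a ^ 2) (θ : ℝ) :
    0 < a + b * cos θ + c * sin θ := by
  have h1 := sin_sq_add_cos_sq θ
  nlinarith [sq_nonneg (b * sin θ - c * cos θ), sq_nonneg (a + b * cos θ + c * sin θ),
    sq_nonneg (a - b * cos θ - c * sin θ)]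

/-- `𝒞` is closed under adding constants. -/
lemma EllipseLog.add_const {g : ℝ → ℝ} (hg : g ∈ EllipseLog) (t : ℝ) :
    (fun φ => g φ + t) ∈ EllipseLog := by
  obtain ⟨a, b, c, ha, habc, rfl⟩ := hg
  refine ⟨exp (-2 * t) * a, exp (-2 * t) * b, exp (-2 * t) * c, by positivity, ?_, ?_⟩
  · have he : (0:ℝ) < exp (-2 * t) := exp_pos _
    calc (exp (-2*t) * b) ^ 2 + (exp (-2*t) * c) ^ 2
        = exp (-2*t) ^ 2 * (b ^ 2 + c ^ 2) := by ring
      _ < exp (-2*t) ^ 2 * a ^ 2 := by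
          exact mul_lt_mul_of_pos_left habc (by positivity)
      _ = (exp (-2*t) * a) ^ 2 := by ring
  · funext φ
    have hpos := trig_pos ha habc (2 * φ)
    have : exp (-2 * t) * a + exp (-2 * t) * b * cos (2 * φ) + exp (-2 * t) * c * sin (2 * φ)
        = exp (-2 * t) * (a + b * cos (2 * φ) + c * sin (2 * φ)) := by ring
    rw [this, log_mul (exp_ne_zero _) hpos.ne', log_exp]
    ring

/-- If `ḡ ∈ 𝒞` is a best uniform approximation to `f` with positive error `𝔡`, then both
extremal sets `Φ` and `Ψ` are nonempty. -/
theorem extremal_sets_nonempty (f : ℝ → ℝ) (hf : Continuous f)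
    (hper : Function.Periodic f π)
    (gbar : ℝ → ℝ) (hgbar : gbar ∈ EllipseLog)
    (hmin : ∀ g ∈ EllipseLog, supDist f gbar ≤ supDist f g)
    (𝔡 : ℝ) (h𝔡 : 𝔡 = supDist f gbar) (hpos : 0 < 𝔡) :
    (∃ φ, f φ - gbar φ = 𝔡) ∧ (∃ ψ, gbar ψ - f ψ = 𝔡) := by
  obtain ⟨a, b, c, ha, habc, hgeq⟩ := hgbar
  -- continuity and periodicity of gbar
  have hgc : Continuous gbar := by
    rw [hgeq]
    exact continuous_const.mul ((by fun_prop : Continuous fun φ =>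
      a + b * cos (2 * φ) + c * sin (2 * φ)).log fun φ => (trig_pos ha habc (2 * φ)).ne')
  have hgp : Function.Periodic gbar π := by
    intro x
    rw [hgeq]
    simp only
    rw [show 2 * (x + π) = 2 * x + 2 * π by ring, cos_add_two_pi, sin_add_two_pi]
  obtain ⟨h, hh⟩ : ∃ h : ℝ → ℝ, h = fun φ => f φ - gbar φ := ⟨_, rfl⟩
  have hhc : Continuous h := by rw [hh]; exact hf.sub hgc
  have hhp : Function.Periodic h π := fun x => by simp [hh, hper x, hgp x]
  have hfg : ∀ φ, f φ - gbar φ = h φ := fun φ => by rw [hh]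
  -- the sup is attained
  obtain ⟨x₀, hx₀⟩ := periodic_exists_max (fun φ => |h φ|) (hhc.abs) (fun x => by
    simp [hhp x])
  have hbdd : BddAbove (Set.range fun φ => |h φ|) := ⟨|h x₀|, by rintro _ ⟨x, rfl⟩; exact hx₀ x⟩
  have hsup : 𝔡 = |h x₀| := by
    rw [h𝔡, supDist]
    simp only [hfg]
    exact le_antisymm (ciSup_le hx₀) (le_ciSup hbdd x₀)
  have hle : ∀ φ, |h φ| ≤ 𝔡 := fun φ => hsup ▸ hx₀ φ
  have hgbar' : gbar ∈ EllipseLog := ⟨a, b, c, ha, habc, hgeq⟩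
  constructor
  · by_contra hno
    push_neg at hno
    obtain ⟨x₁, hx₁⟩ := periodic_exists_max h hhc hhp
    simp only [← hfg] at hx₁
    have hM : f x₁ - gbar x₁ < 𝔡 := lt_of_le_of_ne
      (by simpa [← hfg] using le_trans (le_abs_self (h x₁)) (hle x₁)) (hno x₁)
    set ε := (𝔡 - (f x₁ - gbar x₁)) / 2 with hε
    have hεpos : 0 < ε := by linarith
    have hg' : (fun φ => gbar φ + -ε) ∈ EllipseLog := EllipseLog.add_const hgbar' (-ε)
    have hbound : supDist f (fun φ => gbar φ + -ε) ≤ 𝔡 - ε := by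
      refine ciSup_le fun φ => ?_
      have h1 : f φ - gbar φ ≤ f x₁ - gbar x₁ := hx₁ φ
      have h2 : -𝔡 ≤ f φ - gbar φ := by simpa [← hfg] using neg_le_of_abs_le (hle φ)
      show |f φ - (gbar φ + -ε)| ≤ 𝔡 - ε
      rw [abs_le]
      constructor <;> linarith
    have := hmin _ hg'
    rw [← h𝔡] at this
    linarith
  · by_contra hno
    push_neg at hno
    obtain ⟨x₁, hx₁⟩ := periodic_exists_max (fun φ => -h φ) hhc.neg (fun x => by simp [hhp x])
    simp only [← hfg, neg_sub] at hx₁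
    have hM : gbar x₁ - f x₁ < 𝔡 := lt_of_le_of_ne
      (by simpa [← hfg, neg_sub] using le_trans (neg_le_abs (h x₁)) (hle x₁)) (hno x₁)
    set ε := (𝔡 - (gbar x₁ - f x₁)) / 2 with hε
    have hεpos : 0 < ε := by linarith
    have hg' : (fun φ => gbar φ + ε) ∈ EllipseLog := EllipseLog.add_const hgbar' ε
    have hbound : supDist f (fun φ => gbar φ + ε) ≤ 𝔡 - ε := by
      refine ciSup_le fun φ => ?_
      have h1 : gbar φ - f φ ≤ gbar x₁ - f x₁ := hx₁ φ
      have h2 : f φ - gbar φ ≤ 𝔡 := by simpa [← hfg] using le_trans (le_abs_self (h φ)) (hle φ)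
      show |f φ - (gbar φ + ε)| ≤ 𝔡 - ε
      rw [abs_le]
      constructor <;> linarith
    have := hmin _ hg'
    rw [← h𝔡] at this
    linarith
end

section
/- For every continuous π-periodic function f, the infimum of ‖f − g‖_∞ over g ∈ 𝒞 is attained: there exists ḡ ∈ 𝒞 with ‖f − ḡ‖_∞ = inf{‖f − g‖_∞ : g ∈ 𝒞}. -/
/-!
Write `𝒞 = {G_p}` with `G_p = -(1/2) log e_p` and `e_p(φ) = a + b cos 2φ + c sin 2φ`, for the
parameters `p = (a, b, c)` making `e_p` positive; since `b cos x + c sin x` sweeps out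
`[-√(b² + c²), √(b² + c²)]`, these are exactly the `p` with `√(b² + c²) < a`.
The error `F p = ‖f - G_p‖_∞` is a supremum of functions continuous in `p`, hence lower
semicontinuous. As `G_(1,0,0) = 0`, every `p` with `F p ≤ M := ‖f‖_∞` has `|G_p| ≤ 2M`, i.e. `e_p`
takes values in `[e^(-4M), e^(4M)]`. Such parameters form a compact set (read off `a ± b` and
`a ± c` at `φ = 0, π/2, π/4, -π/4`), on which `F` attains a minimum, and that minimum is global.
-/

open Real

open Set Function

lemma abs_mul_cos_add_mul_sin_le_sqrt (b c x : ℝ) :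
    |b * cos x + c * sin x| ≤ √(b ^ 2 + c ^ 2) :=
  abs_le_sqrt <| by nlinarith [sin_sq_add_cos_sq x, sq_nonneg (b * sin x - c * cos x)]

lemma exists_mul_cos_add_mul_sin_eq_neg_sqrt (b c : ℝ) :
    ∃ x, b * cos x + c * sin x = -√(b ^ 2 + c ^ 2) := by
  set z : ℂ := ⟨-b, -c⟩
  have hz : ‖z‖ = √(b ^ 2 + c ^ 2) := by
    rw [Complex.norm_def, Complex.normSq_apply]
    congr 1
    simp only [z]
    ring
  have hcos : ‖z‖ * cos z.arg = -b := Complex.norm_mul_cos_arg z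
  have hsin : ‖z‖ * sin z.arg = -c := Complex.norm_mul_sin_arg z
  refine ⟨z.arg, ?_⟩
  rw [← hz]
  linear_combination cos z.arg * hcos + sin z.arg * hsin - ‖z‖ * sin_sq_add_cos_sq z.arg

noncomputable def ellipseQuad (p : ℝ × ℝ × ℝ) (φ : ℝ) : ℝ :=
  p.1 + p.2.1 * cos (2 * φ) + p.2.2 * sin (2 * φ)

noncomputable def ellipseLogOf (p : ℝ × ℝ × ℝ) (φ : ℝ) : ℝ :=
  -(1 / 2) * log (ellipseQuad p φ)

def ellipseParams : Set (ℝ × ℝ × ℝ) :=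
  {p | ∀ φ, 0 < ellipseQuad p φ}

lemma continuous_ellipseQuad (p : ℝ × ℝ × ℝ) : Continuous (ellipseQuad p) := by
  unfold ellipseQuad
  fun_prop

lemma continuous_ellipseQuad_apply (φ : ℝ) : Continuous fun p => ellipseQuad p φ := by
  unfold ellipseQuad
  fun_prop

lemma ellipseQuad_periodic (p : ℝ × ℝ × ℝ) : Periodic (ellipseQuad p) π := fun φ => by
  simp only [ellipseQuad, mul_add, cos_add_two_pi, sin_add_two_pi]

lemma mem_ellipseParams_iff {p : ℝ × ℝ × ℝ} :
    p ∈ ellipseParams ↔ 0 < p.1 ∧ p.2.1 ^ 2 + p.2.2 ^ 2 < p.1 ^ 2 := by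
  obtain ⟨a, b, c⟩ := p
  have hpos : (a, b, c) ∈ ellipseParams ↔ √(b ^ 2 + c ^ 2) < a := by
    constructor
    · intro h
      obtain ⟨x, hx⟩ := exists_mul_cos_add_mul_sin_eq_neg_sqrt b c
      have := h (x / 2)
      rw [ellipseQuad, show 2 * (x / 2) = x by ring] at this
      linarith
    · intro h φ
      have := abs_le.1 (abs_mul_cos_add_mul_sin_le_sqrt b c (2 * φ))
      simp only [ellipseQuad]
      linarith
  rw [hpos]
  constructor
  · intro h
    have ha : 0 < a := (sqrt_nonneg _).trans_lt h
    exact ⟨ha, (sqrt_lt' ha).1 h⟩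
  · rintro ⟨ha, h⟩
    exact (sqrt_lt' ha).2 h

lemma ellipseLog_eq_image : EllipseLog = ellipseLogOf '' ellipseParams := by
  ext g
  simp only [EllipseLog, mem_ofPred_eq, mem_image, Prod.exists, mem_ellipseParams_iff]
  constructor
  · rintro ⟨a, b, c, ha, habc, rfl⟩
    exact ⟨a, b, c, ⟨ha, habc⟩, rfl⟩
  · rintro ⟨a, b, c, ⟨ha, habc⟩, rfl⟩
    exact ⟨a, b, c, ha, habc, rfl⟩

lemma exp_neg_two_mul_ellipseLogOf {p : ℝ × ℝ × ℝ} (hp : p ∈ ellipseParams) (φ : ℝ) :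
    exp (-2 * ellipseLogOf p φ) = ellipseQuad p φ := by
  rw [ellipseLogOf, show -2 * (-(1 / 2) * log (ellipseQuad p φ)) = log (ellipseQuad p φ) by ring,
    exp_log (hp φ)]

lemma continuousOn_ellipseLogOf_apply (φ : ℝ) :
    ContinuousOn (fun p => ellipseLogOf p φ) ellipseParams :=
  continuousOn_const.mul ((continuous_ellipseQuad_apply φ).continuousOn.log fun _ hp => (hp φ).ne')

lemma isCompact_setOf_forall_ellipseQuad_mem_Icc (r R : ℝ) :
    IsCompact {p | ∀ φ, ellipseQuad p φ ∈ Icc r R} := by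
  refine (isCompact_Icc (a := (r, r - R, r - R)) (b := (R, R - r, R - r))).of_isClosed_subset ?_ ?_
  · rw [ofPred_forall]
    exact isClosed_iInter fun φ => isClosed_Icc.preimage (continuous_ellipseQuad_apply φ)
  · rintro ⟨a, b, c⟩ hp
    have h₀ : a + b ∈ Icc r R := by simpa [ellipseQuad] using hp 0
    have h₁ : a - b ∈ Icc r R := by
      simpa [ellipseQuad, show 2 * (π / 2) = π by ring, sub_eq_add_neg] using hp (π / 2)
    have h₂ : a + c ∈ Icc r R := by
      simpa [ellipseQuad, show 2 * (π / 4) = π / 2 by ring] using hp (π / 4)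
    have h₃ : a - c ∈ Icc r R := by
      simpa [ellipseQuad, show 2 * (-(π / 4)) = -(π / 2) by ring, sub_eq_add_neg]
        using hp (-(π / 4))
    simp only [mem_Icc, Prod.mk_le_mk] at h₀ h₁ h₂ h₃ ⊢
    refine ⟨⟨?_, ?_, ?_⟩, ?_, ?_, ?_⟩ <;> linarith

lemma abs_sub_le_supDist {f g : ℝ → ℝ} (h : BddAbove (range fun φ => |f φ - g φ|)) (φ : ℝ) :
    |f φ - g φ| ≤ supDist f g :=
  le_ciSup h φ

lemma bddAbove_range_abs_sub_ellipseLogOf {f : ℝ → ℝ} (hf : Continuous f) (hper : Periodic f π)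
    {p : ℝ × ℝ × ℝ} (hp : p ∈ ellipseParams) :
    BddAbove (range fun φ => |f φ - ellipseLogOf p φ|) := by
  have hG : Periodic (ellipseLogOf p) π := fun φ => by
    simp only [ellipseLogOf, ellipseQuad_periodic p φ]
  have hGc : Continuous (ellipseLogOf p) :=
    continuous_const.mul ((continuous_ellipseQuad p).log fun φ => (hp φ).ne')
  exact (((hper.sub hG).comp abs).compact_of_continuous pi_ne_zero
    (continuous_abs.comp (hf.sub hGc))).bddAbove

lemma lowerSemicontinuousOn_supDist_ellipseLogOf {f : ℝ → ℝ} (hf : Continuous f)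
    (hper : Periodic f π) :
    LowerSemicontinuousOn (fun p => supDist f (ellipseLogOf p)) ellipseParams :=
  lowerSemicontinuousOn_ciSup (fun _ hp => bddAbove_range_abs_sub_ellipseLogOf hf hper hp)
    fun φ => (continuousOn_const.sub (continuousOn_ellipseLogOf_apply φ)).abs.lowerSemicontinuousOn

lemma ellipseQuad_mem_Icc_of_supDist_le {f : ℝ → ℝ} {M : ℝ} (hfM : ∀ φ, |f φ| ≤ M)
    {p : ℝ × ℝ × ℝ} (hp : p ∈ ellipseParams)
    (hbdd : BddAbove (range fun φ => |f φ - ellipseLogOf p φ|))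
    (hpM : supDist f (ellipseLogOf p) ≤ M) (φ : ℝ) :
    ellipseQuad p φ ∈ Icc (exp (-(4 * M))) (exp (4 * M)) := by
  have hG : |ellipseLogOf p φ| ≤ 2 * M := calc
    |ellipseLogOf p φ| = |f φ - (f φ - ellipseLogOf p φ)| := by ring_nf
    _ ≤ |f φ| + |f φ - ellipseLogOf p φ| := abs_sub _ _
    _ ≤ M + M := add_le_add (hfM φ) ((abs_sub_le_supDist hbdd φ).trans hpM)
    _ = 2 * M := (two_mul M).symm
  obtain ⟨hlo, hhi⟩ := abs_le.1 hG
  rw [← exp_neg_two_mul_ellipseLogOf hp φ]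
  exact ⟨exp_le_exp.2 (by linarith), exp_le_exp.2 (by linarith)⟩

lemma exists_isMinOn_supDist_ellipseLogOf {f : ℝ → ℝ} (hf : Continuous f) (hper : Periodic f π) :
    ∃ p ∈ ellipseParams, IsMinOn (fun p => supDist f (ellipseLogOf p)) ellipseParams p := by
  set F := fun p => supDist f (ellipseLogOf p)
  set p₀ : ℝ × ℝ × ℝ := (1, 0, 0)
  have hp₀ : p₀ ∈ ellipseParams := mem_ellipseParams_iff.2 ⟨one_pos, by norm_num [p₀]⟩
  have hG₀ : ellipseLogOf p₀ = 0 := funext fun φ => by simp [ellipseLogOf, ellipseQuad, p₀]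
  set M := F p₀
  have hfM : ∀ φ, |f φ| ≤ M := fun φ => calc
    |f φ| = |f φ - ellipseLogOf p₀ φ| := by simp [hG₀]
    _ ≤ M := abs_sub_le_supDist (bddAbove_range_abs_sub_ellipseLogOf hf hper hp₀) φ
  set K := {p | ∀ φ, ellipseQuad p φ ∈ Icc (exp (-(4 * M))) (exp (4 * M))}
  have hK : K ⊆ ellipseParams := fun p hp φ => (exp_pos _).trans_le (hp φ).1
  have hmemK : ∀ p ∈ ellipseParams, F p ≤ M → p ∈ K := fun p hp =>
    ellipseQuad_mem_Icc_of_supDist_le hfM hp (bddAbove_range_abs_sub_ellipseLogOf hf hper hp)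
  obtain ⟨p, hpK, hmin⟩ := ((lowerSemicontinuousOn_supDist_ellipseLogOf hf hper).mono hK)
    |>.exists_isMinOn ⟨p₀, hmemK p₀ hp₀ le_rfl⟩ (isCompact_setOf_forall_ellipseQuad_mem_Icc _ _)
  refine ⟨p, hK hpK, fun q hq => ?_⟩
  by_cases hqM : F q ≤ M
  · exact hmin (hmemK q hq hqM)
  · exact (hmin (hmemK p₀ hp₀ le_rfl)).trans (le_of_not_ge hqM)

/-- The best uniform approximation from `𝒞` to a continuous π-periodic function is
attained. -/
theorem best_approx_exists (f : ℝ → ℝ) (hf : Continuous f)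
    (hper : Function.Periodic f π) :
    ∃ gbar ∈ EllipseLog,
      supDist f gbar = sInf {d : ℝ | ∃ g ∈ EllipseLog, d = supDist f g} := by
  obtain ⟨p, hp, hmin⟩ := exists_isMinOn_supDist_ellipseLogOf hf hper
  have hmem : ellipseLogOf p ∈ EllipseLog := ellipseLog_eq_image ▸ mem_image_of_mem _ hp
  have hleast :
      IsLeast {d : ℝ | ∃ g ∈ EllipseLog, d = supDist f g} (supDist f (ellipseLogOf p)) := by
    refine ⟨⟨_, hmem, rfl⟩, ?_⟩
    rintro d ⟨g, hg, rfl⟩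
    obtain ⟨q, hq, rfl⟩ := ellipseLog_eq_image ▸ hg
    exact hmin hq
  exact ⟨ellipseLogOf p, hmem, hleast.csInf_eq.symm⟩
end
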